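/- arXiv:2402.15479 — 11 statements merged into one kernel-verified Lean document; each statement's English description precedes it below -/
import Mathlib

section
/- If 0 < θ < 1 and x* > 0 is a fixed point of f(x) = L((1+x)/(1+θ+2x))², then |f'(x*)| < 1 (so x* is attracting). -/
/-! The logarithmic derivative of `f` is `2 (1/(1+x) - 2/(1+θ+2x)) = 2(θ-1)/((1+x)(1+θ+2x))`, so at a
fixed point `f'(x*) = 2x*(θ-1)/((1+x*)(1+θ+2x*))`. This is negative, and its absolute value is `< 1`
because `(1+x)(1+θ+2x) - 2x(1-θ) = 1 + θ + (1+3θ)x + 2x² > 0`. -/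

lemma hasDerivAt_const_mul_one_add_div_sq (L c x : ℝ) (hx : 1 + x ≠ 0) (hcx : c + 2 * x ≠ 0) :
    HasDerivAt (fun y => L * ((1 + y) / (c + 2 * y)) ^ 2)
      (L * ((1 + x) / (c + 2 * x)) ^ 2 * (2 * (c - 2) / ((1 + x) * (c + 2 * x)))) x := by
  have hq := ((hasDerivAt_id' x).const_add 1).fun_div
    (((hasDerivAt_id' x).const_mul 2).const_add c) hcx
  refine ((hq.fun_pow 2).const_mul L).congr_deriv ?_
  simp only [Nat.cast_ofNat, Nat.add_one_sub_one, pow_one]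
  field_simp
  ring

lemma abs_mul_two_mul_sub_one_div_lt_one {θ x : ℝ} (hθ0 : 0 ≤ θ) (hθ1 : θ < 1) (hx : 0 < x) :
    |x * (2 * (θ - 1) / ((1 + x) * (1 + θ + 2 * x)))| < 1 := by
  have hden : 0 < (1 + x) * (1 + θ + 2 * x) := by positivity
  rw [mul_div_assoc', abs_div, abs_of_pos hden, div_lt_one hden,
    abs_of_neg (by nlinarith : x * (2 * (θ - 1)) < 0)]
  nlinarith [mul_nonneg hθ0 hx.le]

theorem fixed_point_attracting_theta_lt_one_general (θ L : ℝ) (hθ0 : 0 < θ) (hθ1 : θ < 1)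
    (f : ℝ → ℝ) (hf : ∀ x : ℝ, f x = L * ((1 + x) / (1 + θ + 2 * x)) ^ 2)
    (x : ℝ) (hx : 0 < x) (hfix : f x = x) :
    |deriv f x| < 1 := by
  have hD := hasDerivAt_const_mul_one_add_div_sq L (1 + θ) x (by linarith) (by linarith)
  rw [← funext hf, ← hf x, hfix, show 1 + θ - 2 = θ - 1 by ring] at hD
  rw [hD.deriv]
  exact abs_mul_two_mul_sub_one_div_lt_one hθ0.le hθ1 hx

theorem fixed_point_attracting_theta_lt_one (θ L : ℝ) (hθ0 : 0 < θ) (hθ1 : θ < 1) (hL : 0 < L)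
    (f : ℝ → ℝ) (hf : ∀ x : ℝ, f x = L * ((1 + x) / (1 + θ + 2 * x)) ^ 2)
    (x : ℝ) (hx : 0 < x) (hfix : f x = x) :
    |deriv f x| < 1 :=
  fixed_point_attracting_theta_lt_one_general θ L hθ0 hθ1 f hf x hx hfix
end

section
/- If 1 < θ < 17 and x* > 0 is a fixed point of f(x) = L((1+x)/(1+θ+2x))², then |f'(x*)| < 1. -/
/-
At a fixed point `L (1 + x)² = x (1 + θ + 2x)²`, so the derivative
`f'(x) = 2 L (θ - 1)(1 + x) / (1 + θ + 2x)³` simplifies to `2x(θ - 1) / ((1 + x)(1 + θ + 2x))`.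
This lies in `[0, 1)` exactly when `2x² + (5 - θ)x + 1 + θ > 0`, a quadratic whose discriminant
`(θ - 1)(θ - 17)` is negative for `1 < θ < 17`.
-/

theorem hasDerivAt_mul_div_sq (L θ x : ℝ) (hD : 1 + θ + 2 * x ≠ 0) :
    HasDerivAt (fun y => L * ((1 + y) / (1 + θ + 2 * y)) ^ 2)
      (2 * L * (θ - 1) * (1 + x) / (1 + θ + 2 * x) ^ 3) x := by
  have hnum : HasDerivAt (fun y : ℝ => 1 + y) 1 x := (hasDerivAt_id x).const_add 1
  have hden : HasDerivAt (fun y : ℝ => 1 + θ + 2 * y) 2 x := by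
    simpa using ((hasDerivAt_id x).const_mul 2).const_add (1 + θ)
  refine (((hnum.fun_div hden hD).pow 2).const_mul L).congr_deriv ?_
  simp only [Nat.cast_ofNat, Nat.add_one_sub_one, pow_one]
  field_simp
  ring

theorem deriv_eq_at_fixed_point (L θ x : ℝ) (hx : 1 + x ≠ 0) (hD : 1 + θ + 2 * x ≠ 0)
    (hfix : L * ((1 + x) / (1 + θ + 2 * x)) ^ 2 = x) :
    2 * L * (θ - 1) * (1 + x) / (1 + θ + 2 * x) ^ 3
      = 2 * x * (θ - 1) / ((1 + x) * (1 + θ + 2 * x)) := by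
  have hfix' : L * (1 + x) ^ 2 = x * (1 + θ + 2 * x) ^ 2 := by
    rwa [div_pow, ← mul_div_assoc, div_eq_iff (pow_ne_zero 2 hD)] at hfix
  field_simp
  linear_combination (θ - 1) * hfix'

theorem quadratic_pos_of_one_lt_of_lt_seventeen {θ : ℝ} (hθ1 : 1 < θ) (hθ17 : θ < 17) (x : ℝ) :
    0 < 2 * x ^ 2 + (5 - θ) * x + 1 + θ := by
  nlinarith [sq_nonneg (4 * x + 5 - θ), mul_pos (sub_pos.mpr hθ1) (sub_pos.mpr hθ17)]

theorem fixed_point_attracting_theta_between_one_seventeen_general (θ L : ℝ)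
    (hθ1 : 1 < θ) (hθ17 : θ < 17)
    (f : ℝ → ℝ) (hf : ∀ x : ℝ, f x = L * ((1 + x) / (1 + θ + 2 * x)) ^ 2)
    (x : ℝ) (hx : 0 < x) (hfix : f x = x) :
    |deriv f x| < 1 := by
  have hx1 : 0 < 1 + x := by linarith
  have hD : 0 < 1 + θ + 2 * x := by linarith
  rw [funext hf, (hasDerivAt_mul_div_sq L θ x hD.ne').deriv,
    deriv_eq_at_fixed_point L θ x hx1.ne' hD.ne' ((hf x).symm.trans hfix)]
  have hprod : 0 < (1 + x) * (1 + θ + 2 * x) := mul_pos hx1 hD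
  have hnum : 0 ≤ 2 * x * (θ - 1) := by nlinarith
  rw [abs_of_nonneg (div_nonneg hnum hprod.le), div_lt_one hprod]
  nlinarith [quadratic_pos_of_one_lt_of_lt_seventeen hθ1 hθ17 x]

theorem fixed_point_attracting_theta_between_one_seventeen (θ L : ℝ)
    (hθ1 : 1 < θ) (hθ17 : θ < 17) (hL : 0 < L)
    (f : ℝ → ℝ) (hf : ∀ x : ℝ, f x = L * ((1 + x) / (1 + θ + 2 * x)) ^ 2)
    (x : ℝ) (hx : 0 < x) (hfix : f x = x) :
    |deriv f x| < 1 :=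
  fixed_point_attracting_theta_between_one_seventeen_general θ L hθ1 hθ17 f hf x hx hfix
end

section
/- Let θ ∈ (0,1] ∪ [17,∞), and set x₁* = (θ−5−√(θ²−18θ+17))/4 and x₂* = (θ−5+√(θ²−18θ+17))/4 (real since θ²−18θ+17 ≥ 0). If x* > 0 is a fixed point of f(x) = L((1+x)/(1+θ+2x))² with x* < x₁* or x* > x₂*, then |f'(x*)| < 1; if x₁* < x* < x₂* then |f'(x*)| > 1; if x* = x₁* or x* = x₂* then |f'(x*)| = 1. -/
set_option maxHeartbeats 1000000

theorem fixed_point_type_classification (θ L : ℝ) (hL : 0 < L)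
    (hθ : θ ∈ Set.Ioc (0:ℝ) 1 ∪ Set.Ici (17:ℝ))
    (f : ℝ → ℝ) (hf : ∀ x : ℝ, f x = L * ((1 + x) / (1 + θ + 2 * x)) ^ 2)
    (x₁s x₂s : ℝ)
    (hx₁s : x₁s = (θ - 5 - Real.sqrt (θ ^ 2 - 18 * θ + 17)) / 4)
    (hx₂s : x₂s = (θ - 5 + Real.sqrt (θ ^ 2 - 18 * θ + 17)) / 4)
    (x : ℝ) (hx : 0 < x) (hfix : f x = x) :
    ((x < x₁s ∨ x > x₂s) → |deriv f x| < 1) ∧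
    (x₁s < x ∧ x < x₂s → |deriv f x| > 1) ∧
    ((x = x₁s ∨ x = x₂s) → |deriv f x| = 1) := by
  have hθ0 : 0 < θ := by
    rcases hθ with h | h
    · exact h.1
    · have := Set.mem_Ici.mp h; linarith
  have hdpos : 0 < 1 + θ + 2 * x := by linarith
  have hd : (1 + θ + 2 * x) ≠ 0 := ne_of_gt hdpos
  have h1x : (0:ℝ) < 1 + x := by linarith
  have h1xne : (1 + x) ≠ 0 := ne_of_gt h1x
  have hfe : f = fun y : ℝ => L * ((1 + y) / (1 + θ + 2 * y)) ^ 2 := funext hf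
  have h2 : HasDerivAt (fun y : ℝ => 1 + θ + 2 * y) 2 x := by
    simpa using (((hasDerivAt_id x).const_mul 2).const_add (1 + θ))
  have h1 : HasDerivAt (fun y : ℝ => 1 + y) 1 x := by
    simpa using ((hasDerivAt_id x).const_add 1)
  have hq : HasDerivAt (fun y : ℝ => (1 + y) / (1 + θ + 2 * y))
      ((1 * (1 + θ + 2 * x) - (1 + x) * 2) / (1 + θ + 2 * x) ^ 2) x := h1.div h2 hd
  have hF : HasDerivAt f (L * (2 * ((1 + x) / (1 + θ + 2 * x)) ^ 1 *
      ((1 * (1 + θ + 2 * x) - (1 + x) * 2) / (1 + θ + 2 * x) ^ 2))) x := by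
    rw [hfe]; exact (hq.pow 2).const_mul L
  have key : L * (1 + x) ^ 2 = x * (1 + θ + 2 * x) ^ 2 := by
    have h := hfix
    rw [hf] at h
    field_simp at h
    linarith
  have hder : deriv f x = 2 * x * (θ - 1) / ((1 + x) * (1 + θ + 2 * x)) := by
    rw [hF.deriv]
    field_simp
    ring_nf
    nlinarith [key]
  have hD0 : 0 ≤ θ ^ 2 - 18 * θ + 17 := by
    rcases hθ with h | h
    · nlinarith [h.1, h.2]
    · have := Set.mem_Ici.mp h; nlinarith
  set s := Real.sqrt (θ ^ 2 - 18 * θ + 17) with hsdef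
  have hs : s ^ 2 = θ ^ 2 - 18 * θ + 17 := Real.sq_sqrt hD0
  have hs0 : 0 ≤ s := Real.sqrt_nonneg _
  have hB : 0 < (1 + x) * (1 + θ + 2 * x) := mul_pos h1x hdpos
  have hfact : (1 + x) * (1 + θ + 2 * x) - 2 * x * (θ - 1) = 2 * (x - x₁s) * (x - x₂s) := by
    rw [hx₁s, hx₂s]
    linear_combination (1/8) * hs
  rw [hder, abs_div, abs_of_pos hB]
  rcases hθ with hθ1 | hθ17
  · -- θ ∈ (0,1]
    obtain ⟨hθa, hθb⟩ := hθ1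
    have hx2neg : x₂s < 0 := by
      rw [hx₂s]
      have : s < 5 - θ := by
        rw [hsdef]
        rw [show (5:ℝ) - θ = Real.sqrt ((5-θ)^2) by
          rw [Real.sqrt_sq (by linarith)]]
        apply Real.sqrt_lt_sqrt hD0
        nlinarith
      linarith
    have hx1le : x₁s ≤ x₂s := by rw [hx₁s, hx₂s]; linarith
    refine ⟨?_, ?_, ?_⟩
    · intro _
      rw [div_lt_one hB, abs_lt]
      constructor <;> nlinarith
    · rintro ⟨_, h2⟩; linarith
    · rintro (h | h) <;> linarith
  · -- θ ≥ 17
    have hθ17' : (17:ℝ) ≤ θ := Set.mem_Ici.mp hθ17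
    have hA0 : 0 ≤ 2 * x * (θ - 1) := mul_nonneg (by linarith) (by linarith)
    have hx1le : x₁s ≤ x₂s := by rw [hx₁s, hx₂s]; linarith
    rw [abs_of_nonneg hA0]
    refine ⟨?_, ?_, ?_⟩
    · intro h
      rw [div_lt_one hB]
      rcases h with h | h
      · have hp : 0 < 2 * (x - x₁s) * (x - x₂s) :=
          mul_pos_of_neg_of_neg (by linarith : 2 * (x - x₁s) < 0) (by linarith : x - x₂s < 0)
        linarith [hfact]
      · have hp : 0 < 2 * (x - x₁s) * (x - x₂s) :=
          mul_pos (mul_pos two_pos (sub_pos.mpr (lt_of_le_of_lt hx1le h))) (sub_pos.mpr h)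
        linarith [hfact]
    · rintro ⟨ha, hb⟩
      rw [gt_iff_lt, lt_div_iff₀ hB]
      have hp : 2 * (x - x₁s) * (x - x₂s) < 0 :=
        mul_neg_of_pos_of_neg (mul_pos two_pos (sub_pos.mpr ha)) (sub_neg.mpr hb)
      linarith [hfact]
    · rintro (h | h)
      · have hp : 2 * (x - x₁s) * (x - x₂s) = 0 := by rw [h]; ring
        have he : 2 * x * (θ - 1) = (1 + x) * (1 + θ + 2 * x) := by linarith [hfact]
        rw [he, div_self (ne_of_gt hB)]
      · have hp : 2 * (x - x₁s) * (x - x₂s) = 0 := by rw [h]; ring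
        have he : 2 * x * (θ - 1) = (1 + x) * (1 + θ + 2 * x) := by linarith [hfact]
        rw [he, div_self (ne_of_gt hB)]
end

section
/- For a > 1/2, a ≠ 1, b > 0, the quadratic (a+b)²x² + (2a³ + a²b + 4ab + 2b² − b)x + (a²+b)² has negative discriminant: D = −b(a−1)²(4a³ + 3a²b + 6ab + 4b² − b) < 0. -/
theorem discriminant_negative (a b : ℝ) (ha : 1 / 2 < a) (ha1 : a ≠ 1) (hb : 0 < b) :
    (2 * a ^ 3 + a ^ 2 * b + 4 * a * b + 2 * b ^ 2 - b) ^ 2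
      - 4 * (a + b) ^ 2 * (a ^ 2 + b) ^ 2
      = -b * (a - 1) ^ 2 * (4 * a ^ 3 + 3 * a ^ 2 * b + 6 * a * b + 4 * b ^ 2 - b) ∧
    (2 * a ^ 3 + a ^ 2 * b + 4 * a * b + 2 * b ^ 2 - b) ^ 2
      - 4 * (a + b) ^ 2 * (a ^ 2 + b) ^ 2 < 0 := by
  have hid : (2 * a ^ 3 + a ^ 2 * b + 4 * a * b + 2 * b ^ 2 - b) ^ 2
      - 4 * (a + b) ^ 2 * (a ^ 2 + b) ^ 2
      = -b * (a - 1) ^ 2 * (4 * a ^ 3 + 3 * a ^ 2 * b + 6 * a * b + 4 * b ^ 2 - b) := by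
    ring
  refine ⟨hid, ?_⟩
  rw [hid]
  have hne : a - 1 ≠ 0 := sub_ne_zero.mpr ha1
  have h1 : (0:ℝ) < (a - 1) ^ 2 := by positivity
  have h2 : (0:ℝ) < 4 * a ^ 3 + 3 * a ^ 2 * b + 6 * a * b + 4 * b ^ 2 - b := by
    nlinarith [sq_nonneg a, sq_nonneg b, mul_pos hb hb]
  nlinarith [mul_pos (mul_pos hb h1) h2]
end

section
/- Define sequences l₁⁽⁰⁾ = 0, l₂⁽⁰⁾ = L, l₁⁽ⁿ⁺¹⁾ = L((1+l₁⁽ⁿ⁾)/(1+θ+l₁⁽ⁿ⁾+l₂⁽ⁿ⁾))², l₂⁽ⁿ⁺¹⁾ = L((1+l₂⁽ⁿ⁾)/(1+θ+l₁⁽ⁿ⁾+l₂⁽ⁿ⁾))². Then (l₁⁽ⁿ⁾) is strictly increasing and bounded above by L, and (l₂⁽ⁿ⁾) is strictly decreasing and bounded below by 0; both sequences converge, and the pair of limits (l̂₁, l̂₂) is a fixed point of W. -/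
/-!
`W` preserves the quadrant `[0, ∞)²`, sends it into the open box `(0, L)²`, and is strictly
monotone for the order "first coordinate up, second coordinate down". Since `ℓ₁ = W(0, L)` lies
strictly south-east of `ℓ₀ = (0, L)`, induction makes `(ℓₙ)` move south-east at every step. The
coordinates are then monotone and bounded, hence convergent, and the limit is a fixed point of
`W` because `W` is continuous on the quadrant.
-/

noncomputable def Wmap (θ L : ℝ) (p : ℝ × ℝ) : ℝ × ℝ :=
  (L * ((1 + p.1) / (1 + θ + p.1 + p.2)) ^ 2,
   L * ((1 + p.2) / (1 + θ + p.1 + p.2)) ^ 2)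

/-- The sequence `ℓₙ = Wⁿ(0, L)`. -/
noncomputable def ellSeq (θ L : ℝ) (n : ℕ) : ℝ × ℝ := (Wmap θ L)^[n] (0, L)

open Filter Topology Function

section Wmap

variable {θ L : ℝ}

theorem Wmap_swap (θ L : ℝ) (p : ℝ × ℝ) : Wmap θ L p.swap = (Wmap θ L p).swap := by
  simp only [Wmap, Prod.fst_swap, Prod.snd_swap, Prod.swap_prod_mk, add_right_comm _ p.2 p.1]

theorem Wmap_fst_mem_Ioo (hθ : 0 < θ) (hL : 0 < L) {p : ℝ × ℝ} (h₁ : 0 ≤ p.1) (h₂ : 0 ≤ p.2) :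
    (Wmap θ L p).1 ∈ Set.Ioo 0 L := by
  have hpos : 0 < (1 + p.1) / (1 + θ + p.1 + p.2) := by positivity
  have hlt : (1 + p.1) / (1 + θ + p.1 + p.2) < 1 := by
    rw [div_lt_one (by positivity)]
    linarith
  refine ⟨by simp only [Wmap]; positivity, ?_⟩
  calc (Wmap θ L p).1 = L * ((1 + p.1) / (1 + θ + p.1 + p.2)) ^ 2 := rfl
    _ < L * 1 := by gcongr; exact pow_lt_one₀ hpos.le hlt two_ne_zero
    _ = L := mul_one L

theorem Wmap_snd_mem_Ioo (hθ : 0 < θ) (hL : 0 < L) {p : ℝ × ℝ} (h₁ : 0 ≤ p.1) (h₂ : 0 ≤ p.2) :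
    (Wmap θ L p).2 ∈ Set.Ioo 0 L := by
  simpa [Wmap_swap] using Wmap_fst_mem_Ioo hθ hL (p := p.swap) h₂ h₁

theorem Wmap_fst_lt_fst (hθ : 0 < θ) (hL : 0 < L) {p q : ℝ × ℝ} (hp : 0 ≤ p.1) (hq : 0 ≤ q.2)
    (h₁ : p.1 ≤ q.1) (h₂ : q.2 < p.2) : (Wmap θ L p).1 < (Wmap θ L q).1 := by
  have hp₂ : 0 ≤ p.2 := hq.trans h₂.le
  have hratio : (1 + p.1) / (1 + θ + p.1 + p.2) < (1 + q.1) / (1 + θ + q.1 + q.2) := by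
    rw [div_lt_div_iff₀ (by linarith) (by linarith)]
    -- after cancelling `(1 + p.1) (1 + q.1)`: `(1 + p.1) (θ + q.2) < (1 + q.1) (θ + p.2)`
    nlinarith [mul_lt_mul_of_nonneg_of_pos' (by linarith : 1 + p.1 ≤ 1 + q.1)
      (by linarith : θ + q.2 < θ + p.2) (by linarith : 0 ≤ θ + q.2) (by linarith : 0 < 1 + q.1)]
  show L * _ ^ 2 < L * _ ^ 2
  gcongr

theorem Wmap_snd_lt_snd (hθ : 0 < θ) (hL : 0 < L) {p q : ℝ × ℝ} (hp : 0 ≤ p.1) (hq : 0 ≤ q.2)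
    (h₁ : p.1 < q.1) (h₂ : q.2 ≤ p.2) : (Wmap θ L q).2 < (Wmap θ L p).2 := by
  simpa [Wmap_swap] using Wmap_fst_lt_fst hθ hL (p := q.swap) (q := p.swap) hq hp h₂ h₁

theorem continuousAt_Wmap {p : ℝ × ℝ} (hp : 1 + θ + p.1 + p.2 ≠ 0) :
    ContinuousAt (Wmap θ L) p := by
  unfold Wmap
  fun_prop (disch := exact hp)

end Wmap

section ellSeq

variable {θ L : ℝ}

theorem ellSeq_succ (θ L : ℝ) (n : ℕ) : ellSeq θ L (n + 1) = Wmap θ L (ellSeq θ L n) :=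
  iterate_succ_apply' _ _ _

theorem ellSeq_nonneg (hθ : 0 < θ) (hL : 0 < L) :
    ∀ n, 0 ≤ (ellSeq θ L n).1 ∧ 0 ≤ (ellSeq θ L n).2
  | 0 => ⟨le_rfl, hL.le⟩
  | n + 1 => by
    obtain ⟨h₁, h₂⟩ := ellSeq_nonneg hθ hL n
    rw [ellSeq_succ]
    exact ⟨(Wmap_fst_mem_Ioo hθ hL h₁ h₂).1.le, (Wmap_snd_mem_Ioo hθ hL h₁ h₂).1.le⟩

theorem ellSeq_fst_lt (hθ : 0 < θ) (hL : 0 < L) : ∀ n, (ellSeq θ L n).1 < L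
  | 0 => hL
  | n + 1 => by
    rw [ellSeq_succ]
    exact (Wmap_fst_mem_Ioo hθ hL (ellSeq_nonneg hθ hL n).1 (ellSeq_nonneg hθ hL n).2).2

theorem ellSeq_snd_pos (hθ : 0 < θ) (hL : 0 < L) : ∀ n, 0 < (ellSeq θ L n).2
  | 0 => hL
  | n + 1 => by
    rw [ellSeq_succ]
    exact (Wmap_snd_mem_Ioo hθ hL (ellSeq_nonneg hθ hL n).1 (ellSeq_nonneg hθ hL n).2).1

theorem ellSeq_step (hθ : 0 < θ) (hL : 0 < L) :
    ∀ n, (ellSeq θ L n).1 < (ellSeq θ L (n + 1)).1 ∧ (ellSeq θ L (n + 1)).2 < (ellSeq θ L n).2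
  | 0 => by
    rw [ellSeq_succ]
    exact ⟨(Wmap_fst_mem_Ioo hθ hL le_rfl hL.le).1, (Wmap_snd_mem_Ioo hθ hL le_rfl hL.le).2⟩
  | n + 1 => by
    obtain ⟨h₁, h₂⟩ := ellSeq_step hθ hL n
    have hp := (ellSeq_nonneg hθ hL n).1
    have hq := (ellSeq_nonneg hθ hL (n + 1)).2
    rw [ellSeq_succ θ L (n + 1)]
    exact ⟨by simpa only [← ellSeq_succ] using Wmap_fst_lt_fst hθ hL hp hq h₁.le h₂,
      by simpa only [← ellSeq_succ] using Wmap_snd_lt_snd hθ hL hp hq h₁ h₂.le⟩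

end ellSeq

theorem ell_sequence_converges_to_fixed_point (θ L : ℝ) (hθ : 0 < θ) (hL : 0 < L) :
    StrictMono (fun n => (ellSeq θ L n).1) ∧ (∀ n, (ellSeq θ L n).1 < L) ∧
    StrictAnti (fun n => (ellSeq θ L n).2) ∧ (∀ n, 0 < (ellSeq θ L n).2) ∧
    ∃ l : ℝ × ℝ, Filter.Tendsto (ellSeq θ L) Filter.atTop (nhds l) ∧ Wmap θ L l = l := by
  have hmono : StrictMono fun n => (ellSeq θ L n).1 :=
    strictMono_nat_of_lt_succ fun n => (ellSeq_step hθ hL n).1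
  have hanti : StrictAnti fun n => (ellSeq θ L n).2 :=
    strictAnti_nat_of_succ_lt fun n => (ellSeq_step hθ hL n).2
  have hlt := ellSeq_fst_lt hθ hL
  have hpos := ellSeq_snd_pos hθ hL
  refine ⟨hmono, hlt, hanti, hpos, ?_⟩
  have hlim₁ := tendsto_atTop_ciSup hmono.monotone ⟨L, Set.forall_mem_range.2 fun n => (hlt n).le⟩
  have hlim₂ := tendsto_atTop_ciInf hanti.antitone ⟨0, Set.forall_mem_range.2 fun n => (hpos n).le⟩
  have hl₁ := ge_of_tendsto' hlim₁ fun n => (ellSeq_nonneg hθ hL n).1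
  have hl₂ := ge_of_tendsto' hlim₂ fun n => (ellSeq_nonneg hθ hL n).2
  have hlim : Tendsto (ellSeq θ L) atTop (𝓝 (_, _)) := hlim₁.prodMk_nhds hlim₂
  exact ⟨_, hlim, isFixedPt_of_tendsto_iterate hlim (continuousAt_Wmap (by positivity))⟩
end

section
/- For any initial point (x₀, y₀) ∈ ℝ₊² with trajectory (xₙ, yₙ) = Wⁿ(x₀, y₀), the bounds l₁⁽ⁿ⁾ < x_{n+1} < l₂⁽ⁿ⁾ and l₁⁽ⁿ⁾ < y_{n+1} < l₂⁽ⁿ⁾ hold for all n ≥ 0, where (l₁⁽ⁿ⁾, l₂⁽ⁿ⁾) is the trajectory starting from (0, L). -/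
lemma W1_mono (θ L a b x y : ℝ) (hθ : 0 < θ) (hL : 0 < L) (ha : 0 ≤ a) (hy : 0 ≤ y)
    (hax : a < x) (hyb : y < b) :
    L * ((1 + a) / (1 + θ + a + b)) ^ 2 < L * ((1 + x) / (1 + θ + x + y)) ^ 2 := by
  have hd1 : 0 < 1 + θ + a + b := by linarith
  have hd2 : 0 < 1 + θ + x + y := by linarith
  have hr : (1 + a) / (1 + θ + a + b) < (1 + x) / (1 + θ + x + y) := by
    rw [div_lt_div_iff₀ hd1 hd2]
    nlinarith
  have h0 : 0 ≤ (1 + a) / (1 + θ + a + b) := by positivity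
  exact mul_lt_mul_of_pos_left (pow_lt_pow_left₀ hr h0 two_ne_zero) hL

theorem trajectory_sandwich_bounds (θ L : ℝ) (hθ : 0 < θ) (hL : 0 < L)
    (x₀ y₀ : ℝ) (hx₀ : 0 < x₀) (hy₀ : 0 < y₀) :
    ∀ n : ℕ,
      (ellSeq θ L n).1 < ((Wmap θ L)^[n + 1] (x₀, y₀)).1 ∧
      ((Wmap θ L)^[n + 1] (x₀, y₀)).1 < (ellSeq θ L n).2 ∧
      (ellSeq θ L n).1 < ((Wmap θ L)^[n + 1] (x₀, y₀)).2 ∧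
      ((Wmap θ L)^[n + 1] (x₀, y₀)).2 < (ellSeq θ L n).2 := by
  have hnn : ∀ n : ℕ, 0 ≤ (ellSeq θ L n).1 ∧ 0 ≤ (ellSeq θ L n).2 := by
    intro n
    cases n with
    | zero => constructor <;> simp [ellSeq] <;> linarith
    | succ m =>
      have h : ellSeq θ L (m + 1) = Wmap θ L (ellSeq θ L m) := by
        simp [ellSeq, Function.iterate_succ_apply']
      rw [h]
      simp only [Wmap]
      constructor <;> positivity
  intro n
  induction n with
  | zero =>
    have hd : 0 < 1 + θ + x₀ + y₀ := by linarith
    have hrx : (1 + x₀) / (1 + θ + x₀ + y₀) < 1 := by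
      rw [div_lt_one hd]; linarith
    have hry : (1 + y₀) / (1 + θ + x₀ + y₀) < 1 := by
      rw [div_lt_one hd]; linarith
    have hrx0 : 0 ≤ (1 + x₀) / (1 + θ + x₀ + y₀) := by positivity
    have hry0 : 0 ≤ (1 + y₀) / (1 + θ + x₀ + y₀) := by positivity
    simp only [ellSeq, Function.iterate_zero, id, zero_add, Function.iterate_one, Wmap]
    refine ⟨by positivity, ?_, by positivity, ?_⟩
    · nlinarith [pow_lt_one₀ hrx0 hrx two_ne_zero]
    · nlinarith [pow_lt_one₀ hry0 hry two_ne_zero]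
  | succ m ih =>
    obtain ⟨i1, i2, i3, i4⟩ := ih
    obtain ⟨n1, n2⟩ := hnn m
    have hx : 0 ≤ ((Wmap θ L)^[m + 1] (x₀, y₀)).1 := le_of_lt (lt_of_le_of_lt n1 i1)
    have hy : 0 ≤ ((Wmap θ L)^[m + 1] (x₀, y₀)).2 := le_of_lt (lt_of_le_of_lt n1 i3)
    have he : ellSeq θ L (m + 1) = Wmap θ L (ellSeq θ L m) := by
      simp [ellSeq, Function.iterate_succ_apply']
    have hw : (Wmap θ L)^[m + 1 + 1] (x₀, y₀) = Wmap θ L ((Wmap θ L)^[m + 1] (x₀, y₀)) :=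
      Function.iterate_succ_apply' _ _ _
    rw [he, hw]
    set q := (Wmap θ L)^[m + 1] (x₀, y₀)
    set e := ellSeq θ L m
    have c1 : 1 + θ + e.1 + e.2 = 1 + θ + e.2 + e.1 := by ring
    have c2 : 1 + θ + q.1 + q.2 = 1 + θ + q.2 + q.1 := by ring
    simp only [Wmap]
    refine ⟨?_, ?_, ?_, ?_⟩
    · exact W1_mono θ L e.1 e.2 q.1 q.2 hθ hL n1 hy i1 i4
    · rw [c1]; exact W1_mono θ L q.1 q.2 e.2 e.1 hθ hL hx n1 i2 i3
    · rw [c2]; exact W1_mono θ L e.1 e.2 q.2 q.1 hθ hL n1 hx i3 i2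
    · rw [c1, c2]; exact W1_mono θ L q.2 q.1 e.2 e.1 hθ hL hy n1 i4 i1
end

section
/- Every fixed point (a,b) of W satisfies l̂₁ ≤ a ≤ l̂₂ and l̂₁ ≤ b ≤ l̂₂, where (l̂₁, l̂₂) = limₙ Wⁿ(0, L). In particular, l̂₁ is the minimum of first coordinates of all fixed points and l̂₂ is the maximum of second coordinates. -/
lemma key_half (θ L : ℝ) (hθ : 0 < θ) (hL : 0 < L)
    (lhat : ℝ × ℝ)
    (hconv : Filter.Tendsto (fun n => (Wmap θ L)^[n] (0, L)) Filter.atTop (nhds lhat))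
    (a b : ℝ) (ha : 0 < a) (hb : 0 < b) (hfix : Wmap θ L (a, b) = (a, b)) :
    lhat.1 ≤ a ∧ b ≤ lhat.2 := by
  have hE : (0:ℝ) < 1 + θ + a + b := by linarith
  have h1 := congrArg Prod.fst hfix
  have h2 := congrArg Prod.snd hfix
  simp only [Wmap] at h1 h2
  -- invariant
  have hinv : ∀ n, 0 ≤ ((Wmap θ L)^[n] (0, L)).1 ∧ ((Wmap θ L)^[n] (0, L)).1 ≤ a ∧
      b ≤ ((Wmap θ L)^[n] (0, L)).2 := by
    intro n
    induction n with
    | zero =>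
        simp only [Function.iterate_zero, id_eq]
        refine ⟨le_refl _, ha.le, ?_⟩
        -- b ≤ L since b = L * ((1+b)/E)^2 and ((1+b)/E)^2 < 1
        have hq : (1 + b) / (1 + θ + a + b) < 1 := by
          rw [div_lt_one hE]; linarith
        have hq0 : 0 ≤ (1 + b) / (1 + θ + a + b) :=
          div_nonneg (by linarith) hE.le
        have hq2 : ((1 + b) / (1 + θ + a + b)) ^ 2 ≤ 1 := by nlinarith
        nlinarith [mul_le_mul_of_nonneg_left hq2 hL.le]
    | succ n ih =>
      obtain ⟨hx0, hxa, hby⟩ := ih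
      set x := ((Wmap θ L)^[n] (0, L)).1 with hxdef
      set y := ((Wmap θ L)^[n] (0, L)).2 with hydef
      have hD : (0:ℝ) < 1 + θ + x + y := by linarith
      rw [Function.iterate_succ_apply']
      have hstep : (Wmap θ L) ((Wmap θ L)^[n] (0, L)) =
          (L * ((1 + x) / (1 + θ + x + y)) ^ 2,
           L * ((1 + y) / (1 + θ + x + y)) ^ 2) := rfl
      rw [hstep]
      have hA : (1 + x) / (1 + θ + x + y) ≤ (1 + a) / (1 + θ + a + b) := by
        rw [div_le_div_iff₀ hD hE]
        nlinarith [mul_nonneg ha.le (sub_nonneg.2 hby), mul_nonneg hb.le (sub_nonneg.2 hxa),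
          mul_nonneg hθ.le (sub_nonneg.2 hxa)]
      have hB : (1 + b) / (1 + θ + a + b) ≤ (1 + y) / (1 + θ + x + y) := by
        rw [div_le_div_iff₀ hE hD]
        nlinarith [mul_nonneg ha.le (sub_nonneg.2 hby), mul_nonneg hb.le (sub_nonneg.2 hxa),
          mul_nonneg hθ.le (sub_nonneg.2 hby)]
      have hfrac0 : 0 ≤ (1 + x) / (1 + θ + x + y) := div_nonneg (by linarith) hD.le
      have hfrac0' : 0 ≤ (1 + b) / (1 + θ + a + b) := div_nonneg (by linarith) hE.le
      refine ⟨?_, ?_, ?_⟩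
      · positivity
      · calc L * ((1 + x) / (1 + θ + x + y)) ^ 2
            ≤ L * ((1 + a) / (1 + θ + a + b)) ^ 2 := by
              apply mul_le_mul_of_nonneg_left _ hL.le
              exact pow_le_pow_left₀ hfrac0 hA 2
          _ = a := h1
      · calc b = L * ((1 + b) / (1 + θ + a + b)) ^ 2 := h2.symm
          _ ≤ L * ((1 + y) / (1 + θ + x + y)) ^ 2 := by
              apply mul_le_mul_of_nonneg_left _ hL.le
              exact pow_le_pow_left₀ hfrac0' hB 2
  have hc1 : Filter.Tendsto (fun n => ((Wmap θ L)^[n] (0, L)).1) Filter.atTop (nhds lhat.1) :=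
    (continuous_fst.tendsto lhat).comp hconv
  have hc2 : Filter.Tendsto (fun n => ((Wmap θ L)^[n] (0, L)).2) Filter.atTop (nhds lhat.2) :=
    (continuous_snd.tendsto lhat).comp hconv
  constructor
  · exact le_of_tendsto hc1 (Filter.Eventually.of_forall fun n => (hinv n).2.1)
  · exact ge_of_tendsto hc2 (Filter.Eventually.of_forall fun n => (hinv n).2.2)

theorem fixed_points_between_ell_limits (θ L : ℝ) (hθ : 0 < θ) (hL : 0 < L)
    (lhat : ℝ × ℝ)
    (hconv : Filter.Tendsto (fun n => (Wmap θ L)^[n] (0, L)) Filter.atTop (nhds lhat))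
    (hfixl : Wmap θ L lhat = lhat)
    (hmono1 : Monotone (fun n => ((Wmap θ L)^[n] (0, L)).1))
    (hmono2 : Antitone (fun n => ((Wmap θ L)^[n] (0, L)).2)) :
    (∀ a b : ℝ, 0 < a → 0 < b → Wmap θ L (a, b) = (a, b) →
      lhat.1 ≤ a ∧ a ≤ lhat.2 ∧ lhat.1 ≤ b ∧ b ≤ lhat.2) := by
  intro a b ha hb hfix
  have hfix' : Wmap θ L (b, a) = (b, a) := by
    have h1 := congrArg Prod.fst hfix
    have h2 := congrArg Prod.snd hfix
    simp only [Wmap] at h1 h2 ⊢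
    rw [Prod.mk.injEq]
    constructor
    · rw [show (1:ℝ) + θ + b + a = 1 + θ + a + b by ring]; exact h2
    · rw [show (1:ℝ) + θ + b + a = 1 + θ + a + b by ring]; exact h1
  obtain ⟨h1a, h2b⟩ := key_half θ L hθ hL lhat hconv a b ha hb hfix
  obtain ⟨h1b, h2a⟩ := key_half θ L hθ hL lhat hconv b a hb ha hfix'
  exact ⟨h1a, h2a, h1b, h2b⟩
end

section
/- If W has a unique fixed point in ℝ₊², then for every initial point (x₀, y₀) ∈ ℝ₊², Wⁿ(x₀, y₀) converges to this fixed point. -/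
open Filter Function Set Topology

def SouthEastLE (a b : ℝ × ℝ) : Prop := a.1 ≤ b.1 ∧ b.2 ≤ a.2

def SouthEastMonotoneOn (f : ℝ × ℝ → ℝ × ℝ) (s : Set (ℝ × ℝ)) : Prop :=
  ∀ ⦃x⦄, x ∈ s → ∀ ⦃y⦄, y ∈ s → SouthEastLE x y → SouthEastLE (f x) (f y)

section SouthEastOrder

variable {f : ℝ × ℝ → ℝ × ℝ} {s : Set (ℝ × ℝ)} {a b p : ℝ × ℝ}

lemma SouthEastMonotoneOn.mono {t : Set (ℝ × ℝ)} (hf : SouthEastMonotoneOn f s) (hts : t ⊆ s) :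
    SouthEastMonotoneOn f t :=
  fun _ hx _ hy => hf (hts hx) (hts hy)

lemma SouthEastMonotoneOn.iterate (hf : SouthEastMonotoneOn f s) (hmaps : MapsTo f s s) (n : ℕ) :
    SouthEastMonotoneOn f^[n] s := by
  induction n with
  | zero => exact fun _ _ _ _ h => h
  | succ n ih =>
    intro x hx y hy hxy
    rw [iterate_succ_apply', iterate_succ_apply']
    exact hf (hmaps.iterate n hx) (hmaps.iterate n hy) (ih hx hy hxy)

lemma southEastLE_corner_of_mem_Icc {q : ℝ × ℝ} (hq : q ∈ Icc a b) :
    SouthEastLE (a.1, b.2) q ∧ SouthEastLE q (b.1, a.2) :=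
  ⟨⟨hq.1.1, hq.2.2⟩, ⟨hq.2.1, hq.1.2⟩⟩

lemma exists_tendsto_of_southEastLE_succ {u : ℕ → ℝ × ℝ} (hu : ∀ n, u n ∈ Icc a b)
    (hmono : ∀ n, SouthEastLE (u n) (u (n + 1))) : ∃ q, Tendsto u atTop (𝓝 q) :=
  ⟨_, (tendsto_atTop_ciSup (monotone_nat_of_le_succ fun n => (hmono n).1)
      ⟨b.1, forall_mem_range.2 fun n => (hu n).2.1⟩).prodMk_nhds
    (tendsto_atTop_ciInf (antitone_nat_of_succ_le fun n => (hmono n).2)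
      ⟨a.2, forall_mem_range.2 fun n => (hu n).1.2⟩)⟩

lemma exists_tendsto_of_southEastLE_succ' {u : ℕ → ℝ × ℝ} (hu : ∀ n, u n ∈ Icc a b)
    (hanti : ∀ n, SouthEastLE (u (n + 1)) (u n)) : ∃ q, Tendsto u atTop (𝓝 q) :=
  ⟨_, (tendsto_atTop_ciInf (antitone_nat_of_succ_le fun n => (hanti n).1)
      ⟨a.1, forall_mem_range.2 fun n => (hu n).1.1⟩).prodMk_nhds
    (tendsto_atTop_ciSup (monotone_nat_of_le_succ fun n => (hanti n).2)
      ⟨b.2, forall_mem_range.2 fun n => (hu n).2.2⟩)⟩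

lemma tendsto_of_tendsto_of_tendsto_of_southEastLE {u w v : ℕ → ℝ × ℝ}
    (hu : Tendsto u atTop (𝓝 p)) (hv : Tendsto v atTop (𝓝 p)) (huw : ∀ n, SouthEastLE (u n) (w n))
    (hwv : ∀ n, SouthEastLE (w n) (v n)) : Tendsto w atTop (𝓝 p) := by
  rw [Prod.tendsto_iff] at hu hv ⊢
  exact ⟨tendsto_of_tendsto_of_tendsto_of_le_of_le hu.1 hv.1 (fun n => (huw n).1)
      fun n => (hwv n).1,
    tendsto_of_tendsto_of_tendsto_of_le_of_le hv.2 hu.2 (fun n => (hwv n).2) fun n => (huw n).2⟩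

end SouthEastOrder

lemma tendsto_iterate_of_tendsto_of_isFixedPt_eq {α : Type*} [TopologicalSpace α] [T2Space α]
    {f : α → α} {s : Set α} {p x q : α} (hs : IsClosed s) (hmaps : MapsTo f s s)
    (hcont : ∀ y ∈ s, ContinuousAt f y) (huniq : ∀ y ∈ s, IsFixedPt f y → y = p) (hx : x ∈ s)
    (hq : Tendsto (fun n => f^[n] x) atTop (𝓝 q)) : Tendsto (fun n => f^[n] x) atTop (𝓝 p) := by
  have hqs : q ∈ s := hs.mem_of_tendsto hq (Eventually.of_forall fun n => hmaps.iterate n hx)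
  rwa [← huniq q hqs (isFixedPt_of_tendsto_iterate hq (hcont q hqs))]

theorem tendsto_iterate_of_southEastMonotoneOn {f : ℝ × ℝ → ℝ × ℝ} {a b p x : ℝ × ℝ}
    (hmaps : MapsTo f (Icc a b) (Icc a b)) (hmono : SouthEastMonotoneOn f (Icc a b))
    (hcont : ∀ q ∈ Icc a b, ContinuousAt f q) (huniq : ∀ q ∈ Icc a b, IsFixedPt f q → q = p)
    (hx : x ∈ Icc a b) : Tendsto (fun n => f^[n] x) atTop (𝓝 p) := by
  have hab : a ≤ b := hx.1.trans hx.2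
  have hlo : ((a.1, b.2) : ℝ × ℝ) ∈ Icc a b := ⟨⟨le_rfl, hab.2⟩, ⟨hab.1, le_rfl⟩⟩
  have hhi : ((b.1, a.2) : ℝ × ℝ) ∈ Icc a b := ⟨⟨hab.1, le_rfl⟩, ⟨le_rfl, hab.2⟩⟩
  have orbit_mem : ∀ c ∈ Icc a b, ∀ n, f^[n] c ∈ Icc a b := fun c hc n => hmaps.iterate n hc
  have hlo_lim : Tendsto (fun n => f^[n] (a.1, b.2)) atTop (𝓝 p) := by
    obtain ⟨q, hq⟩ := exists_tendsto_of_southEastLE_succ (orbit_mem _ hlo) fun n => by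
      rw [iterate_succ_apply]
      exact hmono.iterate hmaps n hlo (hmaps hlo) (southEastLE_corner_of_mem_Icc (hmaps hlo)).1
    exact tendsto_iterate_of_tendsto_of_isFixedPt_eq isClosed_Icc hmaps hcont huniq hlo hq
  have hhi_lim : Tendsto (fun n => f^[n] (b.1, a.2)) atTop (𝓝 p) := by
    obtain ⟨q, hq⟩ := exists_tendsto_of_southEastLE_succ' (orbit_mem _ hhi) fun n => by
      rw [iterate_succ_apply]
      exact hmono.iterate hmaps n (hmaps hhi) hhi (southEastLE_corner_of_mem_Icc (hmaps hhi)).2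
    exact tendsto_iterate_of_tendsto_of_isFixedPt_eq isClosed_Icc hmaps hcont huniq hhi hq
  exact tendsto_of_tendsto_of_tendsto_of_southEastLE hlo_lim hhi_lim
    (fun n => hmono.iterate hmaps n hlo hx (southEastLE_corner_of_mem_Icc hx).1)
    (fun n => hmono.iterate hmaps n hx hhi (southEastLE_corner_of_mem_Icc hx).2)

section Wmap

variable {θ L : ℝ}

noncomputable def Wcoord (θ L x y : ℝ) : ℝ := L * ((1 + x) / (1 + θ + x + y)) ^ 2

lemma Wmap_eq_Wcoord (θ L : ℝ) (q : ℝ × ℝ) :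
    Wmap θ L q = (Wcoord θ L q.1 q.2, Wcoord θ L q.2 q.1) := by
  simp only [Wmap, Wcoord, add_right_comm _ q.1 q.2]

lemma Wcoord_pos (hθ : 0 ≤ θ) (hL : 0 < L) {x y : ℝ} (hx : 0 ≤ x) (hy : 0 ≤ y) :
    0 < Wcoord θ L x y := by
  unfold Wcoord
  have : 0 < 1 + θ + x + y := by linarith
  positivity

lemma Wcoord_nonneg (hθ : 0 ≤ θ) (hL : 0 ≤ L) {x y : ℝ} (hx : 0 ≤ x) (hy : 0 ≤ y) :
    0 ≤ Wcoord θ L x y := by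
  unfold Wcoord
  have : 0 < 1 + θ + x + y := by linarith
  positivity

lemma Wcoord_le (hθ : 0 ≤ θ) (hL : 0 ≤ L) {x y : ℝ} (hx : 0 ≤ x) (hy : 0 ≤ y) :
    Wcoord θ L x y ≤ L := by
  have hd : 0 < 1 + θ + x + y := by linarith
  have hr : (1 + x) / (1 + θ + x + y) ≤ 1 := (div_le_one hd).2 (by linarith)
  calc Wcoord θ L x y ≤ L * 1 :=
        mul_le_mul_of_nonneg_left (pow_le_one₀ (div_nonneg (by linarith) hd.le) hr) hL
    _ = L := mul_one L

lemma Wcoord_le_Wcoord (hθ : 0 ≤ θ) (hL : 0 ≤ L) {x y x' y' : ℝ} (hx : 0 ≤ x) (hy' : 0 ≤ y')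
    (hxx' : x ≤ x') (hy'y : y' ≤ y) : Wcoord θ L x y ≤ Wcoord θ L x' y' := by
  have hd : 0 < 1 + θ + x + y := by linarith
  have hd' : 0 < 1 + θ + x' + y' := by linarith
  have hr : (1 + x) / (1 + θ + x + y) ≤ (1 + x') / (1 + θ + x' + y') := by
    rw [div_le_div_iff₀ hd hd']
    nlinarith
  exact mul_le_mul_of_nonneg_left (pow_le_pow_left₀ (div_nonneg (by linarith) hd.le) hr 2) hL

lemma Wmap_mapsTo_Icc (hθ : 0 ≤ θ) (hL : 0 ≤ L) {B : ℝ} (hLB : L ≤ B) :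
    MapsTo (Wmap θ L) (Icc 0 (B, B)) (Icc 0 (B, B)) := by
  intro q ⟨hq, _⟩
  rw [Wmap_eq_Wcoord]
  exact ⟨⟨Wcoord_nonneg hθ hL hq.1 hq.2, Wcoord_nonneg hθ hL hq.2 hq.1⟩,
    ⟨(Wcoord_le hθ hL hq.1 hq.2).trans hLB, (Wcoord_le hθ hL hq.2 hq.1).trans hLB⟩⟩

lemma southEastMonotoneOn_Wmap (hθ : 0 ≤ θ) (hL : 0 ≤ L) :
    SouthEastMonotoneOn (Wmap θ L) (Ici 0) := by
  intro a ha b hb ⟨h₁, h₂⟩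
  rw [Wmap_eq_Wcoord, Wmap_eq_Wcoord]
  exact ⟨Wcoord_le_Wcoord hθ hL ha.1 hb.2 h₁ h₂, Wcoord_le_Wcoord hθ hL hb.2 ha.1 h₂ h₁⟩

lemma continuousAt_Wmap_s14 (hθ : 0 ≤ θ) {q : ℝ × ℝ} (hq : 0 ≤ q) : ContinuousAt (Wmap θ L) q := by
  obtain ⟨h₁, h₂⟩ : 0 ≤ q.1 ∧ 0 ≤ q.2 := hq
  have hd : 1 + θ + q.1 + q.2 ≠ 0 := by positivity
  unfold Wmap
  fun_prop (disch := exact hd)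

lemma pos_of_isFixedPt_Wmap (hθ : 0 ≤ θ) (hL : 0 < L) {q : ℝ × ℝ} (hq : 0 ≤ q)
    (hfix : IsFixedPt (Wmap θ L) q) : 0 < q.1 ∧ 0 < q.2 := by
  rw [← hfix.eq, Wmap_eq_Wcoord]
  exact ⟨Wcoord_pos hθ hL hq.1 hq.2, Wcoord_pos hθ hL hq.2 hq.1⟩

end Wmap

theorem unique_fixed_point_global_convergence_general (θ L : ℝ) (hθ : 0 < θ) (hL : 0 < L)
    (p : ℝ × ℝ)
    (huniq : ∀ q : ℝ × ℝ, 0 < q.1 → 0 < q.2 → Wmap θ L q = q → q = p) :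
    ∀ x₀ y₀ : ℝ, 0 < x₀ → 0 < y₀ →
      Filter.Tendsto (fun n => (Wmap θ L)^[n] (x₀, y₀)) Filter.atTop (nhds p) := by
  intro x₀ y₀ hx₀ hy₀
  set B := max L (max x₀ y₀)
  have hbox : ((x₀, y₀) : ℝ × ℝ) ∈ Icc 0 (B, B) :=
    ⟨⟨hx₀.le, hy₀.le⟩, ⟨(le_max_left _ _).trans (le_max_right _ _),
      (le_max_right _ _).trans (le_max_right _ _)⟩⟩
  refine tendsto_iterate_of_southEastMonotoneOn (Wmap_mapsTo_Icc hθ.le hL.le (le_max_left _ _))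
    (SouthEastMonotoneOn.mono (southEastMonotoneOn_Wmap hθ.le hL.le) Icc_subset_Ici_self)
    (fun q hq => continuousAt_Wmap_s14 hθ.le hq.1) (fun q hq hfix => ?_) hbox
  obtain ⟨hq₁, hq₂⟩ := pos_of_isFixedPt_Wmap hθ.le hL hq.1 hfix
  exact huniq q hq₁ hq₂ hfix

theorem unique_fixed_point_global_convergence (θ L : ℝ) (hθ : 0 < θ) (hL : 0 < L)
    (p : ℝ × ℝ) (hp1 : 0 < p.1) (hp2 : 0 < p.2) (hpfix : Wmap θ L p = p)
    (huniq : ∀ q : ℝ × ℝ, 0 < q.1 → 0 < q.2 → Wmap θ L q = q → q = p) :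
    ∀ x₀ y₀ : ℝ, 0 < x₀ → 0 < y₀ →
      Filter.Tendsto (fun n => (Wmap θ L)^[n] (x₀, y₀)) Filter.atTop (nhds p) :=
  unique_fixed_point_global_convergence_general θ L hθ hL p huniq
end

section
/- The map W is competitive (monotone with respect to the South-East order): if x₁ ≤ x₂ and y₁ ≥ y₂ with (x₁,y₁), (x₂,y₂) ∈ ℝ₊², then the first coordinate of W(x₁,y₁) is ≤ the first coordinate of W(x₂,y₂) and the second coordinate of W(x₁,y₁) is ≥ the second coordinate of W(x₂,y₂). -/
theorem W_is_competitive (θ L : ℝ) (hθ : 0 < θ) (hL : 0 < L)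
    (x₁ y₁ x₂ y₂ : ℝ) (hx₁ : 0 < x₁) (hy₁ : 0 < y₁) (hx₂ : 0 < x₂) (hy₂ : 0 < y₂)
    (hx : x₁ ≤ x₂) (hy : y₂ ≤ y₁) :
    (Wmap θ L (x₁, y₁)).1 ≤ (Wmap θ L (x₂, y₂)).1 ∧
    (Wmap θ L (x₂, y₂)).2 ≤ (Wmap θ L (x₁, y₁)).2 := by
  have d1 : (0:ℝ) < 1 + θ + x₁ + y₁ := by linarith
  have d2 : (0:ℝ) < 1 + θ + x₂ + y₂ := by linarith
  simp only [Wmap]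
  constructor
  · apply mul_le_mul_of_nonneg_left _ hL.le
    apply pow_le_pow_left₀ (by positivity)
    rw [div_le_div_iff₀ d1 d2]
    nlinarith
  · apply mul_le_mul_of_nonneg_left _ hL.le
    apply pow_le_pow_left₀ (by positivity)
    rw [div_le_div_iff₀ d2 d1]
    nlinarith
end

section
/- If L·Λ(θ) < 1, where Λ(θ) = 1/(4(θ−1)) for θ > 3 and Λ(θ) = 2/(1+θ)² for 0 < θ ≤ 3, then for any initial point (x₀,y₀) ∈ ℝ₊², the difference yₙ − xₙ of the trajectory (xₙ, yₙ) = Wⁿ(x₀, y₀) tends to 0 as n → ∞; hence every limit point of the trajectory lies on the diagonal {(x,y) : x = y}. -/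
noncomputable def Lambda (θ : ℝ) : ℝ :=
  if 3 < θ then 1 / (4 * (θ - 1)) else 2 / (1 + θ) ^ 2

open Filter Topology

theorem MapClusterPt.eq_of_tendsto_comp {X Y α : Type*} [TopologicalSpace X] [TopologicalSpace Y]
    [T2Space Y] {F : Filter α} {u : α → X} {x : X} {f : X → Y} {y : Y}
    (hu : MapClusterPt x F u) (hf : ContinuousAt f x) (h : Tendsto (f ∘ u) F (𝓝 y)) :
    f x = y :=
  eq_of_nhds_neBot <| (hu.continuousAt_comp hf).clusterPt.mono h

theorem tendsto_zero_of_abs_succ_le_mul {a : ℕ → ℝ} {q : ℝ} (hq₀ : 0 ≤ q) (hq₁ : q < 1)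
    (h : ∀ n, |a (n + 1)| ≤ q * |a n|) : Tendsto a atTop (𝓝 0) := by
  have hgeom : ∀ n, |a n| ≤ q ^ n * |a 0| := fun n => le_geom (u := fun n => |a n|) hq₀ n fun k _ => h k
  have hlim : Tendsto (fun n => q ^ n * |a 0|) atTop (𝓝 0) := by
    simpa using (tendsto_pow_atTop_nhds_zero_of_lt_one hq₀ hq₁).mul_const |a 0|
  exact squeeze_zero_norm hgeom hlim

theorem two_add_div_sq_le_Lambda {θ s : ℝ} (hθ : 0 < θ) (hs : 0 ≤ s) :
    (2 + s) / (1 + θ + s) ^ 2 ≤ Lambda θ := by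
  unfold Lambda
  split_ifs with h
  · rw [div_le_div_iff₀ (by positivity) (by linarith)]
    nlinarith [sq_nonneg (s + 3 - θ)]
  · rw [div_le_div_iff₀ (by positivity) (by positivity)]
    nlinarith [mul_nonneg hs (mul_nonneg (by linarith : (0:ℝ) ≤ 1 + θ) (sub_nonneg.2 (not_lt.1 h)))]

theorem Lambda_pos {θ : ℝ} (hθ : 0 < θ) : 0 < Lambda θ :=
  lt_of_lt_of_le (by positivity) (two_add_div_sq_le_Lambda hθ le_rfl)

theorem Wmap_nonneg {θ L : ℝ} (hL : 0 ≤ L) (p : ℝ × ℝ) : 0 ≤ Wmap θ L p :=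
  Prod.le_def.2 ⟨by unfold Wmap; positivity, by unfold Wmap; positivity⟩

theorem Wmap_snd_sub_fst (θ L : ℝ) (p : ℝ × ℝ) :
    (Wmap θ L p).2 - (Wmap θ L p).1
      = L * ((2 + (p.1 + p.2)) / (1 + θ + (p.1 + p.2)) ^ 2) * (p.2 - p.1) := by
  simp only [Wmap, div_pow]
  ring

theorem abs_Wmap_snd_sub_fst_le {θ L : ℝ} (hθ : 0 < θ) (hL : 0 ≤ L) {p : ℝ × ℝ} (hp : 0 ≤ p) :
    |(Wmap θ L p).2 - (Wmap θ L p).1| ≤ L * Lambda θ * |p.2 - p.1| := by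
  have hs : 0 ≤ p.1 + p.2 := add_nonneg hp.1 hp.2
  rw [Wmap_snd_sub_fst, abs_mul, abs_of_nonneg (mul_nonneg hL (by positivity))]
  gcongr
  exact two_add_div_sq_le_Lambda hθ hs

theorem limit_points_on_diagonal_general (θ L : ℝ) (hθ : 0 < θ) (hL : 0 < L)
    (hLam : L * Lambda θ < 1)
    (x₀ y₀ : ℝ) :
    Filter.Tendsto
      (fun n => ((Wmap θ L)^[n] (x₀, y₀)).2 - ((Wmap θ L)^[n] (x₀, y₀)).1)
      Filter.atTop (nhds 0) ∧
    ∀ p : ℝ × ℝ, MapClusterPt p Filter.atTop (fun n => (Wmap θ L)^[n] (x₀, y₀)) →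
      p.1 = p.2 := by
  set u : ℕ → ℝ × ℝ := fun n => (Wmap θ L)^[n] (x₀, y₀)
  have hsucc (n : ℕ) : u (n + 1) = Wmap θ L (u n) := Function.iterate_succ_apply' _ _ _
  have hgap : Tendsto (fun n => (u n).2 - (u n).1) atTop (𝓝 0) := by
    refine (tendsto_add_atTop_iff_nat 1).1 <|
      tendsto_zero_of_abs_succ_le_mul (mul_pos hL (Lambda_pos hθ)).le hLam fun n => ?_
    rw [hsucc (n + 1), hsucc n]
    exact abs_Wmap_snd_sub_fst_le hθ hL.le (Wmap_nonneg hL.le _)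
  refine ⟨hgap, fun p hp => ?_⟩
  have : p.2 - p.1 = 0 := hp.eq_of_tendsto_comp (continuous_snd.sub continuous_fst).continuousAt hgap
  linarith

theorem limit_points_on_diagonal (θ L : ℝ) (hθ : 0 < θ) (hL : 0 < L)
    (hLam : L * Lambda θ < 1)
    (x₀ y₀ : ℝ) (hx₀ : 0 < x₀) (hy₀ : 0 < y₀) :
    Filter.Tendsto
      (fun n => ((Wmap θ L)^[n] (x₀, y₀)).2 - ((Wmap θ L)^[n] (x₀, y₀)).1)
      Filter.atTop (nhds 0) ∧
    ∀ p : ℝ × ℝ, MapClusterPt p Filter.atTop (fun n => (Wmap θ L)^[n] (x₀, y₀)) →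
      p.1 = p.2 :=
  limit_points_on_diagonal_general θ L hθ hL hLam x₀ y₀
end

section
/- For x, y > 0, the point (x,y) satisfies (x,y) ⪯_se W(x,y) (i.e., x ≤ x' and y ≥ y' where (x',y') = W(x,y)) if and only if x ≥ ψ(y) and y ≤ ψ(x), where ψ(u) = √L·(1/√u + √u) − (1+θ+u). -/
noncomputable def psiCurve (θ L u : ℝ) : ℝ :=
  Real.sqrt L * (1 / Real.sqrt u + Real.sqrt u) - (1 + θ + u)

lemma sqrt_mul_one_div_sqrt_add_sqrt (L : ℝ) {a : ℝ} (ha : 0 < a) :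
    √L * (1 / √a + √a) = √(L * (1 + a) ^ 2 / a) := by
  rw [Real.sqrt_div' _ ha.le, Real.sqrt_mul' L (sq_nonneg _), Real.sqrt_sq (by linarith)]
  field_simp
  rw [Real.sq_sqrt ha.le]

lemma le_mul_div_sq_iff (L : ℝ) {a S : ℝ} (ha : 0 < a) (hS : 0 < S) :
    a ≤ L * ((1 + a) / S) ^ 2 ↔ S ≤ √L * (1 / √a + √a) := by
  rw [sqrt_mul_one_div_sqrt_add_sqrt L ha, Real.le_sqrt' hS, le_div_iff₀ ha, div_pow,
    mul_div_assoc', le_div_iff₀ (by positivity), mul_comm]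

lemma mul_div_sq_le_iff (L : ℝ) {a S : ℝ} (ha : 0 < a) (hS : 0 < S) :
    L * ((1 + a) / S) ^ 2 ≤ a ↔ √L * (1 / √a + √a) ≤ S := by
  rw [sqrt_mul_one_div_sqrt_add_sqrt L ha, Real.sqrt_le_left hS.le, div_le_iff₀ ha, div_pow,
    mul_div_assoc', div_le_iff₀ (by positivity), mul_comm a]

theorem se_below_W_iff_psi_general (θ L : ℝ) (hθ : 0 < θ)
    (x y : ℝ) (hx : 0 < x) (hy : 0 < y) :
    (x ≤ (Wmap θ L (x, y)).1 ∧ (Wmap θ L (x, y)).2 ≤ y) ↔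
      (psiCurve θ L y ≤ x ∧ y ≤ psiCurve θ L x) := by
  have hS : 0 < 1 + θ + x + y := by linarith
  simp only [Wmap, psiCurve]
  rw [le_mul_div_sq_iff L hx hS, mul_div_sq_le_iff L hy hS]
  constructor <;> rintro ⟨h₁, h₂⟩ <;> constructor <;> linarith

theorem se_below_W_iff_psi (θ L : ℝ) (hθ : 0 < θ) (hL : 0 < L)
    (x y : ℝ) (hx : 0 < x) (hy : 0 < y) :
    (x ≤ (Wmap θ L (x, y)).1 ∧ (Wmap θ L (x, y)).2 ≤ y) ↔
      (psiCurve θ L y ≤ x ∧ y ≤ psiCurve θ L x) :=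
  se_below_W_iff_psi_general θ L hθ x y hx hy
end
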